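/- Let x, y, z be vertices of three pairwise distinct receiver states (H_i, V_i), (H_k, V_k), (H_m, V_m) over N such that every pair of them satisfies BC2. Then for every p ∈ x ∩ H_k, every q ∈ y ∩ H_m and every r ∈ z ∩ H_i, the packet combination {p, q, r} benefits all three vertices x, y and z. -/

import Mathlib

/-! A packet combination containing a packet of `x`, and otherwise only packets of `x ∪ H`
plus one arbitrary packet `c`, benefits `x`: it is instantly decodable when `c ∈ x ∪ H`,
and otherwise aggregating with the vertex that contains `c`. Each of `{p, q, r}` is of this
shape for each of the three vertices. -/

/-- A receiver state over a finite set `N` of packets: a Has set `H ⊆ N` together with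
a family `V` of nonempty, pairwise disjoint packet sets (the vertices) whose union is `N \ H`. -/
structure ReceiverState (N : Finset ℕ) where
  H : Finset ℕ
  V : Finset (Finset ℕ)
  has_subset : H ⊆ N
  vertex_nonempty : ∀ x ∈ V, x.Nonempty
  vertex_disjoint : ∀ x ∈ V, ∀ y ∈ V, x ≠ y → Disjoint x y
  vertex_union : V.sup id = N \ H

/-- `P` is instantly decodable for vertex `x` of receiver state `R`. -/
def InstantlyDecodable {N : Finset ℕ} (R : ReceiverState N) (x P : Finset ℕ) : Prop :=
  P ⊆ x ∪ R.H ∧ (P ∩ x).Nonempty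

/-- `P` is aggregating for vertex `x` of receiver state `R`. -/
def Aggregating {N : Finset ℕ} (R : ReceiverState N) (x P : Finset ℕ) : Prop :=
  ∃ y ∈ R.V, y ≠ x ∧ P ⊆ x ∪ y ∪ R.H ∧ (P ∩ x).Nonempty ∧ (P ∩ y).Nonempty

/-- `P` benefits vertex `x` of receiver state `R`. -/
def Benefits {N : Finset ℕ} (R : ReceiverState N) (x P : Finset ℕ) : Prop :=
  InstantlyDecodable R x P ∨ Aggregating R x P

/-- Condition BC1 between vertices `x` and `y` of two different receiver states. -/
def BC1 (x y : Finset ℕ) : Prop := (x ∩ y).Nonempty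

/-- Condition BC2 between vertex `x` of `Ri` and vertex `y` of `Rk`. -/
def BC2 {N : Finset ℕ} (Ri Rk : ReceiverState N) (x y : Finset ℕ) : Prop :=
  x ∩ y = ∅ ∧ (x ∩ Rk.H).Nonempty ∧ (y ∩ Ri.H).Nonempty

namespace ReceiverState

variable {N : Finset ℕ} (R : ReceiverState N)

theorem vertex_subset {x : Finset ℕ} (hx : x ∈ R.V) : x ⊆ N := fun _ he =>
  (Finset.mem_sdiff.1 (R.vertex_union ▸ Finset.le_sup (f := id) hx he)).1

theorem exists_vertex_mem {c : ℕ} (hc : c ∈ N) (hcH : c ∉ R.H) : ∃ w ∈ R.V, c ∈ w := by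
  have hc' : c ∈ R.V.sup id := R.vertex_union ▸ Finset.mem_sdiff.2 ⟨hc, hcH⟩
  simpa using Finset.mem_sup.1 hc'

end ReceiverState

theorem benefits_of_subset_insert {N : Finset ℕ} (R : ReceiverState N) {x P : Finset ℕ} {c : ℕ}
    (hx : x ∈ R.V) (hc : c ∈ N) (hP : P ⊆ insert c (x ∪ R.H)) (hPx : (P ∩ x).Nonempty) :
    Benefits R x P := by
  by_cases hPxH : P ⊆ x ∪ R.H
  · exact Or.inl ⟨hPxH, hPx⟩
  obtain ⟨e, heP, hexH⟩ := Finset.not_subset.1 hPxH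
  obtain rfl : e = c := (Finset.mem_insert.1 (hP heP)).resolve_right hexH
  obtain ⟨w, hw, hew⟩ := R.exists_vertex_mem hc fun h => hexH (Finset.mem_union_right _ h)
  refine Or.inr ⟨w, hw, ?_, ?_, hPx, ⟨e, Finset.mem_inter.2 ⟨heP, hew⟩⟩⟩
  · rintro rfl
    exact hexH (Finset.mem_union_left _ hew)
  · intro a ha
    have ha' := hP ha
    simp only [Finset.mem_insert, Finset.mem_union] at ha' ⊢
    grind

theorem stmt4_general {N : Finset ℕ} (Ri Rk Rm : ReceiverState N)
    (x y z : Finset ℕ) (hx : x ∈ Ri.V) (hy : y ∈ Rk.V) (hz : z ∈ Rm.V) :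
    ∀ p ∈ x ∩ Rk.H, ∀ q ∈ y ∩ Rm.H, ∀ r ∈ z ∩ Ri.H,
      Benefits Ri x {p, q, r} ∧ Benefits Rk y {p, q, r} ∧ Benefits Rm z {p, q, r} := by
  intro p hp q hq r hr
  rw [Finset.mem_inter] at hp hq hr
  refine ⟨benefits_of_subset_insert Ri hx (Rk.vertex_subset hy hq.1) ?_ ⟨p, by simp [hp.1]⟩,
    benefits_of_subset_insert Rk hy (Rm.vertex_subset hz hr.1) ?_ ⟨q, by simp [hq.1]⟩,
    benefits_of_subset_insert Rm hz (Ri.vertex_subset hx hp.1) ?_ ⟨r, by simp [hr.1]⟩⟩ <;>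
  · intro a ha
    simp only [Finset.mem_insert, Finset.mem_singleton, Finset.mem_union] at ha ⊢
    grind

/-- If the three vertices pairwise satisfy BC2, then for any `p ∈ x ∩ H_k`,
`q ∈ y ∩ H_m`, `r ∈ z ∩ H_i`, the combination `{p, q, r}` benefits all three. -/
theorem stmt4 {N : Finset ℕ} (Ri Rk Rm : ReceiverState N)
    (hik : Ri ≠ Rk) (him : Ri ≠ Rm) (hkm : Rk ≠ Rm)
    (x y z : Finset ℕ) (hx : x ∈ Ri.V) (hy : y ∈ Rk.V) (hz : z ∈ Rm.V)
    (hxy : BC2 Ri Rk x y) (hxz : BC2 Ri Rm x z) (hyz : BC2 Rk Rm y z) :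
    ∀ p ∈ x ∩ Rk.H, ∀ q ∈ y ∩ Rm.H, ∀ r ∈ z ∩ Ri.H,
      Benefits Ri x {p, q, r} ∧ Benefits Rk y {p, q, r} ∧ Benefits Rm z {p, q, r} :=
  stmt4_general Ri Rk Rm x y z hx hy hz
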